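/- Möbius left translations are isometries of the Poincaré ball: for all a, x, y ∈ B_c^n, d_c(a ⊕_c x, a ⊕_c y) = d_c(x, y). -/

import Mathlib

noncomputable section

open scoped RealInnerProductSpace

attribute [local instance] Classical.propDecidable

/-- Inverse hyperbolic tangent. -/
def artanh (x : ℝ) : ℝ := Real.log ((1 + x) / (1 - x)) / 2

/-- Möbius addition on the Poincaré ball of curvature `-c` in `ℝ^n`:
`x ⊕_c y = ((1 + 2c⟨x,y⟩ + c‖y‖²)x + (1 − c‖x‖²)y) / (1 + 2c⟨x,y⟩ + c²‖x‖²‖y‖²)`. -/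
def mobiusAdd {n : ℕ} (c : ℝ) (x y : EuclideanSpace ℝ (Fin n)) :
    EuclideanSpace ℝ (Fin n) :=
  (1 + 2 * c * ⟪x, y⟫ + c ^ 2 * ‖x‖ ^ 2 * ‖y‖ ^ 2)⁻¹ •
    ((1 + 2 * c * ⟪x, y⟫ + c * ‖y‖ ^ 2) • x + (1 - c * ‖x‖ ^ 2) • y)

/-- The geodesic distance on the Poincaré ball:
`d_c(x,y) = (2/√c)·artanh(√c‖(⊖_c x) ⊕_c y‖)`, where `⊖_c x = -x`. -/
def pdist {n : ℕ} (c : ℝ) (x y : EuclideanSpace ℝ (Fin n)) : ℝ :=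
  (2 / Real.sqrt c) * artanh (Real.sqrt c * ‖mobiusAdd c (-x) y‖)

/-- The conformal factor `λ_x^c = 2/(1 − c‖x‖²)`. -/
def lam {n : ℕ} (c : ℝ) (x : EuclideanSpace ℝ (Fin n)) : ℝ :=
  2 / (1 - c * ‖x‖ ^ 2)

/-- The exponential map at `x`:
`exp_x^c(v) = x ⊕_c ((1/√c)·tanh(√c·λ_x^c·‖v‖/2)·v/‖v‖)` for `v ≠ 0`, `exp_x^c(0) = x`. -/
def expMap {n : ℕ} (c : ℝ) (x v : EuclideanSpace ℝ (Fin n)) :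
    EuclideanSpace ℝ (Fin n) :=
  if v = 0 then x else
    mobiusAdd c x
      (((1 / Real.sqrt c) * Real.tanh (Real.sqrt c * lam c x * ‖v‖ / 2) * ‖v‖⁻¹) • v)

/-- The logarithmic map at `x`:
`log_x^c(y) = (2/(√c·λ_x^c))·artanh(√c‖(⊖_c x) ⊕_c y‖)·((⊖_c x) ⊕_c y)/‖(⊖_c x) ⊕_c y‖`
for `y ≠ x`, and `log_x^c(x) = 0`. -/
def logMap {n : ℕ} (c : ℝ) (x y : EuclideanSpace ℝ (Fin n)) :
    EuclideanSpace ℝ (Fin n) :=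
  if y = x then 0 else
    ((2 / (Real.sqrt c * lam c x)) * artanh (Real.sqrt c * ‖mobiusAdd c (-x) y‖) *
        ‖mobiusAdd c (-x) y‖⁻¹) • mobiusAdd c (-x) y


section MobiusAux

variable {n : ℕ}

lemma normsq_comb (α β : ℝ) (a b : EuclideanSpace ℝ (Fin n)) :
    ‖α • a + β • b‖ ^ 2 =
      α ^ 2 * ‖a‖ ^ 2 + 2 * (α * β) * ⟪a, b⟫ + β ^ 2 * ‖b‖ ^ 2 := by
  rw [← real_inner_self_eq_norm_sq]
  simp only [inner_add_left, inner_add_right, real_inner_smul_left, real_inner_smul_right]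
  rw [real_inner_self_eq_norm_sq, real_inner_self_eq_norm_sq, real_inner_comm b a]
  ring

lemma inner_comb (α β γ δ : ℝ) (a b a' b' : EuclideanSpace ℝ (Fin n)) :
    ⟪α • a + β • b, γ • a' + δ • b'⟫ =
      α * γ * ⟪a, a'⟫ + α * δ * ⟪a, b'⟫ + β * γ * ⟪b, a'⟫ + β * δ * ⟪b, b'⟫ := by
  simp only [inner_add_left, inner_add_right, real_inner_smul_left, real_inner_smul_right]
  ring

lemma denom_pos {c u v i : ℝ} (hc : 0 < c) (hu : 0 ≤ u) (hv : 0 ≤ v)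
    (hu1 : c * u ^ 2 < 1) (hv1 : c * v ^ 2 < 1) (hi : -(u * v) ≤ i) :
    0 < 1 + 2 * c * i + c ^ 2 * u ^ 2 * v ^ 2 := by
  have hau : 0 ≤ c * u ^ 2 := by positivity
  have hav : 0 ≤ c * v ^ 2 := by positivity
  have h2 : (c * (u * v)) ^ 2 < 1 := by nlinarith
  have h3 : 0 ≤ c * (u * v) := by positivity
  have h4 : c * (u * v) < 1 := by nlinarith
  have h5 : 0 < 1 - c * (u * v) := by linarith
  nlinarith [mul_pos h5 h5, mul_le_mul_of_nonneg_left hi hc.le]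

lemma mobius_conformal (c : ℝ) (x y : EuclideanSpace ℝ (Fin n))
    (hs : 1 + 2 * c * ⟪x, y⟫ + c ^ 2 * ‖x‖ ^ 2 * ‖y‖ ^ 2 ≠ 0) :
    (1 - c * ‖mobiusAdd c x y‖ ^ 2) *
        (1 + 2 * c * ⟪x, y⟫ + c ^ 2 * ‖x‖ ^ 2 * ‖y‖ ^ 2) =
      (1 - c * ‖x‖ ^ 2) * (1 - c * ‖y‖ ^ 2) := by
  unfold mobiusAdd
  rw [norm_smul, mul_pow, Real.norm_eq_abs, sq_abs, normsq_comb]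
  obtain ⟨r, hr⟩ : ∃ r, ⟪x, y⟫ = r := ⟨_, rfl⟩
  rw [hr] at hs ⊢
  apply mul_left_cancel₀ hs
  have hinv := mul_inv_cancel₀ hs
  linear_combination (-c * ((1 + 2 * c * r + c * ‖y‖ ^ 2) ^ 2 * ‖x‖ ^ 2 +
    2 * ((1 + 2 * c * r + c * ‖y‖ ^ 2) * (1 - c * ‖x‖ ^ 2)) * r +
    (1 - c * ‖x‖ ^ 2) ^ 2 * ‖y‖ ^ 2) *
    ((1 + 2 * c * r + c ^ 2 * ‖x‖ ^ 2 * ‖y‖ ^ 2) *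
      (1 + 2 * c * r + c ^ 2 * ‖x‖ ^ 2 * ‖y‖ ^ 2)⁻¹ + 1)) * hinv

end MobiusAux

set_option maxHeartbeats 4000000 in
/-- Möbius left translations are isometries of the Poincaré ball. -/
theorem mobius_translation_isometry {n : ℕ} (hn : 1 ≤ n) (c : ℝ) (hc : 0 < c)
    (a x y : EuclideanSpace ℝ (Fin n))
    (ha : c * ‖a‖ ^ 2 < 1) (hx : c * ‖x‖ ^ 2 < 1) (hy : c * ‖y‖ ^ 2 < 1) :
    pdist c (mobiusAdd c a x) (mobiusAdd c a y) = pdist c x y := by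
  have hax := neg_le_of_abs_le (abs_real_inner_le_norm a x)
  have hay := neg_le_of_abs_le (abs_real_inner_le_norm a y)
  have hxy := neg_le_of_abs_le (abs_real_inner_le_norm x y)
  have hs : 0 < 1 + 2 * c * ⟪a, x⟫ + c ^ 2 * ‖a‖ ^ 2 * ‖x‖ ^ 2 :=
    denom_pos hc (norm_nonneg a) (norm_nonneg x) ha hx hax
  have ht : 0 < 1 + 2 * c * ⟪a, y⟫ + c ^ 2 * ‖a‖ ^ 2 * ‖y‖ ^ 2 :=
    denom_pos hc (norm_nonneg a) (norm_nonneg y) ha hy hay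
  set u := mobiusAdd c a x with hu
  set v := mobiusAdd c a y with hv
  have h3 := mobius_conformal c a x hs.ne'
  have h4 := mobius_conformal c a y ht.ne'
  rw [← hu] at h3
  rw [← hv] at h4
  have hA : 0 < 1 - c * ‖a‖ ^ 2 := by linarith
  have hX : 0 < 1 - c * ‖x‖ ^ 2 := by linarith
  have hY : 0 < 1 - c * ‖y‖ ^ 2 := by linarith
  have hcu : c * ‖u‖ ^ 2 < 1 := by nlinarith [mul_pos hA hX]
  have hcv : c * ‖v‖ ^ 2 < 1 := by nlinarith [mul_pos hA hY]
  have huv := neg_le_of_abs_le (abs_real_inner_le_norm u v)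
  -- inner product bounds for the negated first arguments
  have huvn : -(‖(-u : EuclideanSpace ℝ (Fin n))‖ * ‖v‖) ≤ ⟪(-u : EuclideanSpace ℝ (Fin n)), v⟫ :=
    neg_le_of_abs_le (abs_real_inner_le_norm _ v)
  have hxyn : -(‖(-x : EuclideanSpace ℝ (Fin n))‖ * ‖y‖) ≤ ⟪(-x : EuclideanSpace ℝ (Fin n)), y⟫ :=
    neg_le_of_abs_le (abs_real_inner_le_norm _ y)
  have hDuv : 0 < 1 + 2 * c * ⟪(-u : EuclideanSpace ℝ (Fin n)), v⟫ +
      c ^ 2 * ‖(-u : EuclideanSpace ℝ (Fin n))‖ ^ 2 * ‖v‖ ^ 2 :=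
    denom_pos hc (norm_nonneg _) (norm_nonneg v) (by rwa [norm_neg]) hcv huvn
  have hDxy : 0 < 1 + 2 * c * ⟪(-x : EuclideanSpace ℝ (Fin n)), y⟫ +
      c ^ 2 * ‖(-x : EuclideanSpace ℝ (Fin n))‖ ^ 2 * ‖y‖ ^ 2 :=
    denom_pos hc (norm_nonneg _) (norm_nonneg y) (by rwa [norm_neg]) hy hxyn
  have h1 := mobius_conformal c (-u) v hDuv.ne'
  have h2 := mobius_conformal c (-x) y hDxy.ne'
  rw [norm_neg, inner_neg_left] at h1 h2 hDuv hDxy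
  -- explicit expansions of the translated points
  have hudef : u = (1 + 2 * c * ⟪a, x⟫ + c ^ 2 * ‖a‖ ^ 2 * ‖x‖ ^ 2)⁻¹ •
      ((1 + 2 * c * ⟪a, x⟫ + c * ‖x‖ ^ 2) • a + (1 - c * ‖a‖ ^ 2) • x) := rfl
  have hvdef : v = (1 + 2 * c * ⟪a, y⟫ + c ^ 2 * ‖a‖ ^ 2 * ‖y‖ ^ 2)⁻¹ •
      ((1 + 2 * c * ⟪a, y⟫ + c * ‖y‖ ^ 2) • a + (1 - c * ‖a‖ ^ 2) • y) := rfl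
  have hIuv : ⟪u, v⟫ =
      (1 + 2 * c * ⟪a, x⟫ + c ^ 2 * ‖a‖ ^ 2 * ‖x‖ ^ 2)⁻¹ *
      (1 + 2 * c * ⟪a, y⟫ + c ^ 2 * ‖a‖ ^ 2 * ‖y‖ ^ 2)⁻¹ *
      ((1 + 2 * c * ⟪a, x⟫ + c * ‖x‖ ^ 2) * (1 + 2 * c * ⟪a, y⟫ + c * ‖y‖ ^ 2) * ‖a‖ ^ 2 +
       (1 + 2 * c * ⟪a, x⟫ + c * ‖x‖ ^ 2) * (1 - c * ‖a‖ ^ 2) * ⟪a, y⟫ +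
       (1 - c * ‖a‖ ^ 2) * (1 + 2 * c * ⟪a, y⟫ + c * ‖y‖ ^ 2) * ⟪a, x⟫ +
       (1 - c * ‖a‖ ^ 2) * (1 - c * ‖a‖ ^ 2) * ⟪x, y⟫) := by
    rw [hudef, hvdef, real_inner_smul_left, real_inner_smul_right, inner_comb,
      real_inner_self_eq_norm_sq, real_inner_comm x a]
    ring
  have hNu : ‖u‖ ^ 2 =
      ((1 + 2 * c * ⟪a, x⟫ + c ^ 2 * ‖a‖ ^ 2 * ‖x‖ ^ 2)⁻¹) ^ 2 *
      ((1 + 2 * c * ⟪a, x⟫ + c * ‖x‖ ^ 2) ^ 2 * ‖a‖ ^ 2 +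
       2 * ((1 + 2 * c * ⟪a, x⟫ + c * ‖x‖ ^ 2) * (1 - c * ‖a‖ ^ 2)) * ⟪a, x⟫ +
       (1 - c * ‖a‖ ^ 2) ^ 2 * ‖x‖ ^ 2) := by
    rw [hudef, norm_smul, mul_pow, Real.norm_eq_abs, sq_abs, normsq_comb]
  have hNv : ‖v‖ ^ 2 =
      ((1 + 2 * c * ⟪a, y⟫ + c ^ 2 * ‖a‖ ^ 2 * ‖y‖ ^ 2)⁻¹) ^ 2 *
      ((1 + 2 * c * ⟪a, y⟫ + c * ‖y‖ ^ 2) ^ 2 * ‖a‖ ^ 2 +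
       2 * ((1 + 2 * c * ⟪a, y⟫ + c * ‖y‖ ^ 2) * (1 - c * ‖a‖ ^ 2)) * ⟪a, y⟫ +
       (1 - c * ‖a‖ ^ 2) ^ 2 * ‖y‖ ^ 2) := by
    rw [hvdef, norm_smul, mul_pow, Real.norm_eq_abs, sq_abs, normsq_comb]
  -- the key algebraic identity
  have hkey : (1 + 2 * c * -⟪u, v⟫ + c ^ 2 * ‖u‖ ^ 2 * ‖v‖ ^ 2) *
      ((1 + 2 * c * ⟪a, x⟫ + c ^ 2 * ‖a‖ ^ 2 * ‖x‖ ^ 2) *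
       (1 + 2 * c * ⟪a, y⟫ + c ^ 2 * ‖a‖ ^ 2 * ‖y‖ ^ 2)) =
      (1 - c * ‖a‖ ^ 2) ^ 2 * (1 + 2 * c * -⟪x, y⟫ + c ^ 2 * ‖x‖ ^ 2 * ‖y‖ ^ 2) := by
    rw [hIuv, hNu, hNv]
    have hs' := hs.ne'
    have ht' := ht.ne'
    obtain ⟨p, hp⟩ : ∃ p, ⟪a, x⟫ = p := ⟨_, rfl⟩
    obtain ⟨q, hq⟩ : ∃ q, ⟪a, y⟫ = q := ⟨_, rfl⟩
    obtain ⟨r, hr⟩ : ∃ r, ⟪x, y⟫ = r := ⟨_, rfl⟩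
    rw [hp] at hs' ⊢
    rw [hq] at ht' ⊢
    rw [hr]
    field_simp
    ring
  -- cancel to obtain equality of the conformal factors
  have hcan : (1 - c * ‖mobiusAdd c (-u) v‖ ^ 2) *
        ((1 - c * ‖a‖ ^ 2) ^ 2 * (1 + 2 * c * -⟪x, y⟫ + c ^ 2 * ‖x‖ ^ 2 * ‖y‖ ^ 2)) =
      (1 - c * ‖mobiusAdd c (-x) y‖ ^ 2) *
        ((1 - c * ‖a‖ ^ 2) ^ 2 * (1 + 2 * c * -⟪x, y⟫ + c ^ 2 * ‖x‖ ^ 2 * ‖y‖ ^ 2)) := by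
    linear_combination
      ((1 + 2 * c * ⟪a, x⟫ + c ^ 2 * ‖a‖ ^ 2 * ‖x‖ ^ 2) *
        (1 + 2 * c * ⟪a, y⟫ + c ^ 2 * ‖a‖ ^ 2 * ‖y‖ ^ 2)) * h1 +
      ((1 - c * ‖v‖ ^ 2) * (1 + 2 * c * ⟪a, y⟫ + c ^ 2 * ‖a‖ ^ 2 * ‖y‖ ^ 2)) * h3 +
      ((1 - c * ‖a‖ ^ 2) * (1 - c * ‖x‖ ^ 2)) * h4 -
      (1 - c * ‖a‖ ^ 2) ^ 2 * h2 -
      (1 - c * ‖mobiusAdd c (-u) v‖ ^ 2) * hkey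
  have hpos : ((1 - c * ‖a‖ ^ 2) ^ 2 * (1 + 2 * c * -⟪x, y⟫ + c ^ 2 * ‖x‖ ^ 2 * ‖y‖ ^ 2)) ≠ 0 :=
    (mul_pos (pow_pos hA 2) hDxy).ne'
  have hL := mul_right_cancel₀ hpos hcan
  have hsq : ‖mobiusAdd c (-u) v‖ ^ 2 = ‖mobiusAdd c (-x) y‖ ^ 2 :=
    mul_left_cancel₀ hc.ne' (by linarith)
  have hnorm : ‖mobiusAdd c (-u) v‖ = ‖mobiusAdd c (-x) y‖ := by
    calc ‖mobiusAdd c (-u) v‖ = Real.sqrt (‖mobiusAdd c (-u) v‖ ^ 2) :=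
          (Real.sqrt_sq (norm_nonneg _)).symm
      _ = Real.sqrt (‖mobiusAdd c (-x) y‖ ^ 2) := by rw [hsq]
      _ = ‖mobiusAdd c (-x) y‖ := Real.sqrt_sq (norm_nonneg _)
  simp only [pdist]
  rw [hnorm]
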